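/- arXiv:2212.12784 — 4 statements merged into one kernel-verified Lean document; each statement's English description precedes it below -/
import Mathlib

section
/- For h,k = 1,…,d let A^{hk} and M^{hk} be m×m real matrices such that |Im Σ_{h,k=1}^d (A^{hk}θ^k, θ^h)| ≤ C₀ Re Σ_{h,k=1}^d (M^{hk}θ^k, θ^h) for some constant C₀ > 0 and every θ¹,…,θ^d ∈ ℂ^m. Then, with A_as^{hk} := (A^{hk} − (A^{kh})^T)/2, the inequality |Σ_{h,k=1}^d (A_as^{hk}θ^k, η^h)| ≤ C₀ (Re Σ_{h,k=1}^d (M^{hk}θ^k, θ^h))^{1/2} (Re Σ_{h,k=1}^d (M^{hk}η^k, η^h))^{1/2} holds for every θ¹,…,θ^d, η¹,…,η^d ∈ ℂ^m. -/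
/-!
`B := cform (asymPart A)` is skew-Hermitian, `B η θ = -conj (B θ η)`, and has the same
diagonal imaginary part as `cform A`, so `q χ := C₀ Re (cform M χ χ)` bounds `|Im B χ χ|`.
Polarization and the parallelogram law for `cform M` give `2 Im B θ η ≤ q θ + q η`;
replacing `θ` by `s θ` for real `s`, the discriminant of the resulting quadratic in `s`
yields `(Im B θ η)² ≤ q θ q η`, i.e. a Cauchy–Schwarz inequality for `Im B`. Finally,
multiplying `θ` by a suitable phase turns `Im B θ η` into `‖B θ η‖`.
-/

open ComplexConjugate

noncomputable section

/-- The sesquilinear form `Σ_{h,k} (A^{hk} θ^k, η^h)` associated with a family of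
`m × m` real matrices `A^{hk}` (`h,k = 1,…,d`), where `(·,·)` is the Hermitian inner
product `(u,v) = Σ_i u_i conj(v_i)` on `ℂ^m`. -/
def cform {d m : ℕ} (A : Fin d → Fin d → Fin m → Fin m → ℝ)
    (θ η : Fin d → Fin m → ℂ) : ℂ :=
  ∑ h, ∑ k, ∑ i, ∑ j, (A h k i j : ℂ) * θ k j * conj (η h i)

/-- The antisymmetric part `A_as^{hk} = (A^{hk} − (A^{kh})^T)/2` of a family of real
matrices. -/
def asymPart {d m : ℕ} (A : Fin d → Fin d → Fin m → Fin m → ℝ) :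
    Fin d → Fin d → Fin m → Fin m → ℝ :=
  fun h k i j => (A h k i j - A k h j i) / 2

section Sesquilinear

variable {V : Type*} [AddCommGroup V] [Module ℂ V]

lemma re_apply_smul_smul (N : V →ₗ[ℂ] V →ₗ⋆[ℂ] ℂ) (c : ℂ) (x : V) :
    (N (c • x) (c • x)).re = Complex.normSq c * (N x x).re := by
  simp only [map_smul, map_smulₛₗ, LinearMap.smul_apply, smul_eq_mul, ← mul_assoc,
    ← Complex.normSq_eq_conj_mul_self, Complex.re_ofReal_mul]

lemma re_apply_parallelogram (N : V →ₗ[ℂ] V →ₗ⋆[ℂ] ℂ) (x y : V) :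
    (N (x + y) (x + y)).re + (N (x - y) (x - y)).re = 2 * (N x x).re + 2 * (N y y).re := by
  simp only [map_add, map_sub, LinearMap.add_apply, LinearMap.sub_apply, Complex.add_re,
    Complex.sub_re]
  ring

variable {B N : V →ₗ[ℂ] V →ₗ⋆[ℂ] ℂ}

lemma two_mul_im_apply_le (hB : ∀ x y, B y x = -conj (B x y))
    (hBN : ∀ x, |(B x x).im| ≤ (N x x).re) (x y : V) :
    2 * (B x y).im ≤ (N x x).re + (N y y).re := by
  have hyx : (B y x).im = (B x y).im := by rw [hB x y, Complex.neg_im, Complex.conj_im, neg_neg]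
  have hpolar : (B (x + y) (x + y)).im - (B (x - y) (x - y)).im = 4 * (B x y).im := by
    simp only [map_add, map_sub, LinearMap.add_apply, LinearMap.sub_apply, Complex.add_im,
      Complex.sub_im, hyx]
    ring
  have hsum := (abs_le.1 (hBN (x + y))).2
  have hdiff := (abs_le.1 (hBN (x - y))).1
  linarith [re_apply_parallelogram N x y]

lemma im_apply_sq_le (hB : ∀ x y, B y x = -conj (B x y))
    (hBN : ∀ x, |(B x x).im| ≤ (N x x).re) (x y : V) :
    (B x y).im ^ 2 ≤ (N x x).re * (N y y).re := by
  have hquad : ∀ s : ℝ, 0 ≤ (N x x).re * (s * s) + (-2 * (B x y).im) * s + (N y y).re := by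
    intro s
    have h := two_mul_im_apply_le hB hBN ((s : ℂ) • x) y
    rw [re_apply_smul_smul, Complex.normSq_ofReal, map_smul, LinearMap.smul_apply,
      smul_eq_mul, Complex.im_ofReal_mul] at h
    linarith
  have := discrim_le_zero hquad
  rw [discrim] at this
  linarith

theorem norm_apply_le_sqrt_mul_sqrt (hB : ∀ x y, B y x = -conj (B x y))
    (hBN : ∀ x, |(B x x).im| ≤ (N x x).re) (x y : V) :
    ‖B x y‖ ≤ √(N x x).re * √(N y y).re := by
  rw [← Real.sqrt_mul ((abs_nonneg _).trans (hBN x))]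
  apply Real.le_sqrt_of_sq_le
  set z := B x y
  rcases eq_or_ne z 0 with hz | hz
  · rw [hz, norm_zero, sq, zero_mul]
    exact mul_nonneg ((abs_nonneg _).trans (hBN x)) ((abs_nonneg _).trans (hBN y))
  -- rotating `x` by the phase `I * conj z` turns `B x y = z` into `I * ‖z‖²`
  have h := im_apply_sq_le hB hBN ((Complex.I * conj z) • x) y
  rw [re_apply_smul_smul, map_smul, LinearMap.smul_apply, smul_eq_mul, mul_assoc,
    Complex.conj_mul', Complex.normSq_mul, Complex.normSq_I, Complex.normSq_conj,
    Complex.normSq_eq_norm_sq, one_mul, ← Complex.ofReal_pow, Complex.im_mul_ofReal,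
    Complex.I_im, one_mul, mul_assoc, sq (‖z‖ ^ 2)] at h
  exact le_of_mul_le_mul_left h (by positivity)

end Sesquilinear

section CForm

variable {d m : ℕ}

def cformₗ (A : Fin d → Fin d → Fin m → Fin m → ℝ) :
    (Fin d → Fin m → ℂ) →ₗ[ℂ] (Fin d → Fin m → ℂ) →ₗ⋆[ℂ] ℂ :=
  LinearMap.mk₂'ₛₗ (RingHom.id ℂ) (starRingEnd ℂ) (cform A)
    (fun θ₁ θ₂ η => by simp only [cform, Pi.add_apply, mul_add, add_mul, Finset.sum_add_distrib])
    (fun c θ η => by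
      simp only [cform, Pi.smul_apply, smul_eq_mul, RingHom.id_apply, Finset.mul_sum]
      exact Finset.sum_congr rfl fun _ _ => Finset.sum_congr rfl fun _ _ =>
        Finset.sum_congr rfl fun _ _ => Finset.sum_congr rfl fun _ _ => by ring)
    (fun θ η₁ η₂ => by
      simp only [cform, Pi.add_apply, map_add, mul_add, Finset.sum_add_distrib])
    (fun c θ η => by
      simp only [cform, Pi.smul_apply, smul_eq_mul, map_mul, Finset.mul_sum]
      exact Finset.sum_congr rfl fun _ _ => Finset.sum_congr rfl fun _ _ =>
        Finset.sum_congr rfl fun _ _ => Finset.sum_congr rfl fun _ _ => by ring)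

@[simp]
lemma cformₗ_apply (A : Fin d → Fin d → Fin m → Fin m → ℝ) (θ η : Fin d → Fin m → ℂ) :
    cformₗ A θ η = cform A θ η :=
  rfl

lemma conj_cform (A : Fin d → Fin d → Fin m → Fin m → ℝ) (θ η : Fin d → Fin m → ℂ) :
    conj (cform A η θ) = cform (fun h k i j => A k h j i) θ η := by
  simp only [cform, map_sum, map_mul, Complex.conj_ofReal, Complex.conj_conj]
  rw [Finset.sum_comm]
  refine Finset.sum_congr rfl fun _ _ => Finset.sum_congr rfl fun _ _ => ?_
  rw [Finset.sum_comm]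
  exact Finset.sum_congr rfl fun _ _ => Finset.sum_congr rfl fun _ _ => by ring

lemma cform_asymPart (A : Fin d → Fin d → Fin m → Fin m → ℝ) (θ η : Fin d → Fin m → ℂ) :
    cform (asymPart A) θ η = (cform A θ η - conj (cform A η θ)) / 2 := by
  rw [conj_cform, eq_div_iff two_ne_zero]
  simp only [cform, asymPart, Finset.sum_mul, ← Finset.sum_sub_distrib]
  refine Finset.sum_congr rfl fun _ _ => Finset.sum_congr rfl fun _ _ =>
    Finset.sum_congr rfl fun _ _ => Finset.sum_congr rfl fun _ _ => ?_
  push_cast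
  ring

lemma cform_asymPart_swap (A : Fin d → Fin d → Fin m → Fin m → ℝ) (θ η : Fin d → Fin m → ℂ) :
    cform (asymPart A) η θ = -conj (cform (asymPart A) θ η) := by
  rw [cform_asymPart, cform_asymPart, map_div₀, map_sub, Complex.conj_conj, map_ofNat]
  ring

lemma im_cform_asymPart_self (A : Fin d → Fin d → Fin m → Fin m → ℝ) (θ : Fin d → Fin m → ℂ) :
    (cform (asymPart A) θ θ).im = (cform A θ θ).im := by
  simp [cform_asymPart]

end CForm

theorem statement12_general (d m : ℕ)
    (A M : Fin d → Fin d → Fin m → Fin m → ℝ) (C₀ : ℝ) (hC₀ : 0 < C₀)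
    (hIm : ∀ θ : Fin d → Fin m → ℂ, |(cform A θ θ).im| ≤ C₀ * (cform M θ θ).re) :
    ∀ θ η : Fin d → Fin m → ℂ,
      ‖cform (asymPart A) θ η‖ ≤
        C₀ * Real.sqrt ((cform M θ θ).re) * Real.sqrt ((cform M η η).re) := by
  intro θ η
  have hre : ∀ χ, (((C₀ : ℂ) • cformₗ M) χ χ).re = C₀ * (cform M χ χ).re := fun χ => by
    simp only [LinearMap.smul_apply, cformₗ_apply, smul_eq_mul, Complex.re_ofReal_mul]
  have h := norm_apply_le_sqrt_mul_sqrt (B := cformₗ (asymPart A)) (N := (C₀ : ℂ) • cformₗ M)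
    (fun χ ψ => cform_asymPart_swap A χ ψ)
    (fun χ => by rw [hre, cformₗ_apply, im_cform_asymPart_self]; exact hIm χ) θ η
  rw [hre, hre, Real.sqrt_mul hC₀.le, Real.sqrt_mul hC₀.le, cformₗ_apply] at h
  calc ‖cform (asymPart A) θ η‖
      ≤ √C₀ * √(cform M θ θ).re * (√C₀ * √(cform M η η).re) := h
    _ = C₀ * √(cform M θ θ).re * √(cform M η η).re := by
      linear_combination √(cform M θ θ).re * √(cform M η η).re * Real.mul_self_sqrt hC₀.le

theorem statement12 (d m : ℕ) (hd : 0 < d) (hm : 0 < m)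
    (A M : Fin d → Fin d → Fin m → Fin m → ℝ) (C₀ : ℝ) (hC₀ : 0 < C₀)
    (hIm : ∀ θ : Fin d → Fin m → ℂ, |(cform A θ θ).im| ≤ C₀ * (cform M θ θ).re) :
    ∀ θ η : Fin d → Fin m → ℂ,
      ‖cform (asymPart A) θ η‖ ≤
        C₀ * Real.sqrt ((cform M θ θ).re) * Real.sqrt ((cform M η η).re) :=
  statement12_general d m A M C₀ hC₀ hIm
end
end

section
/- Suppose Q(x) is a symmetric positive definite real d×d matrix for every x ∈ ℝ^d, with minimum eigenvalue λ_Q(x), and suppose the m×m real matrices A^{hk}(x) (h,k = 1,…,d) satisfy: Σ_{h,k=1}^d (A^{hk}(x)ϑ^k, ϑ^h) ≥ 0 for all ϑ¹,…,ϑ^d ∈ ℝ^m, and |a^{hk}_{ij}(x)| ≤ k₀ λ_Q(x) for all i,j = 1,…,m, h,k = 1,…,d and some constant k₀ > 0. Then, for every x ∈ ℝ^d and θ¹,…,θ^d ∈ ℂ^m, 0 ≤ Re Σ_{h,k=1}^d (A^{hk}(x)θ^k, θ^h) ≤ m d k₀ Re Σ_{i=1}^m Σ_{h,k=1}^d q_{hk}(x)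 θ^k_i conj(θ^h_i) and |Im Σ_{h,k=1}^d (A^{hk}(x)θ^k, θ^h)| ≤ m d k₀ Re Σ_{i=1}^m Σ_{h,k=1}^d q_{hk}(x) θ^k_i conj(θ^h_i); that is, the structural conditions on the coupling matrices hold with constant 𝒞 = m d k₀. -/
open ComplexConjugate

noncomputable section

/-- `Σ_{h,k} (A^{hk}(x) θ^k, θ^h)` for a family of `m × m` real matrix-valued functions
`A^{hk}` on `ℝ^d`, with `(u,v) = Σ_i u_i conj(v_i)` the Hermitian inner product. -/
def Aform {d m : ℕ} (A : Fin d → Fin d → Fin m → Fin m → (Fin d → ℝ) → ℝ)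
    (x : Fin d → ℝ) (θ : Fin d → Fin m → ℂ) : ℂ :=
  ∑ h, ∑ k, ∑ i, ∑ j, (A h k i j x : ℂ) * θ k j * conj (θ h i)

/-- `Σ_{i=1}^m Σ_{h,k=1}^d q_{hk}(x) θ^k_i conj(θ^h_i)`. -/
def Qdiagform {d m : ℕ} (q : Fin d → Fin d → (Fin d → ℝ) → ℝ)
    (x : Fin d → ℝ) (θ : Fin d → Fin m → ℂ) : ℂ :=
  ∑ i, ∑ h, ∑ k, (q h k x : ℂ) * θ k i * conj (θ h i)

section Aux

variable {d m : ℕ}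

/-- Factoring a quadruple sum of products. -/
lemma aux_factor (c : ℝ) (f g : Fin d → Fin m → ℝ) :
    ∑ h : Fin d, ∑ k : Fin d, ∑ i : Fin m, ∑ j : Fin m, c * f k j * g h i
      = c * ((∑ k, ∑ j, f k j) * (∑ h, ∑ i, g h i)) := by
  simp only [← Finset.sum_mul, ← Finset.mul_sum]
  ring

/-- Core bound on a quadruple sum with bounded coefficients. -/
lemma aux_core (c : ℝ) (hc : 0 ≤ c) (B : Fin d → Fin d → Fin m → Fin m → ℝ)
    (hB : ∀ h k i j, |B h k i j| ≤ c) (ϑ ψ : Fin d → Fin m → ℝ) :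
    |∑ h, ∑ k, ∑ i, ∑ j, B h k i j * ϑ k j * ψ h i|
      ≤ c * ((∑ k, ∑ j, |ϑ k j|) * (∑ h, ∑ i, |ψ h i|)) := by
  rw [← aux_factor c (fun k j => |ϑ k j|) (fun h i => |ψ h i|)]
  calc |∑ h, ∑ k, ∑ i, ∑ j, B h k i j * ϑ k j * ψ h i|
      ≤ ∑ h, |∑ k, ∑ i, ∑ j, B h k i j * ϑ k j * ψ h i| := Finset.abs_sum_le_sum_abs _ _
    _ ≤ ∑ h, ∑ k, |∑ i, ∑ j, B h k i j * ϑ k j * ψ h i| :=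
        Finset.sum_le_sum fun h _ => Finset.abs_sum_le_sum_abs _ _
    _ ≤ ∑ h, ∑ k, ∑ i, |∑ j, B h k i j * ϑ k j * ψ h i| :=
        Finset.sum_le_sum fun h _ => Finset.sum_le_sum fun k _ => Finset.abs_sum_le_sum_abs _ _
    _ ≤ ∑ h, ∑ k, ∑ i, ∑ j, |B h k i j * ϑ k j * ψ h i| :=
        Finset.sum_le_sum fun h _ => Finset.sum_le_sum fun k _ =>
          Finset.sum_le_sum fun i _ => Finset.abs_sum_le_sum_abs _ _
    _ ≤ ∑ h, ∑ k, ∑ i, ∑ j, c * |ϑ k j| * |ψ h i| := by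
        refine Finset.sum_le_sum fun h _ => Finset.sum_le_sum fun k _ =>
          Finset.sum_le_sum fun i _ => Finset.sum_le_sum fun j _ => ?_
        rw [abs_mul, abs_mul]
        exact mul_le_mul_of_nonneg_right
          (mul_le_mul_of_nonneg_right (hB h k i j) (abs_nonneg _)) (abs_nonneg _)

/-- Cauchy–Schwarz for the double sum of absolute values. -/
lemma aux_cs (ϑ : Fin d → Fin m → ℝ) :
    (∑ h, ∑ i, |ϑ h i|) ^ 2 ≤ (d * m : ℝ) * ∑ h, ∑ i, ϑ h i ^ 2 := by
  have h1 : (∑ h, ∑ i, |ϑ h i|) = ∑ p : Fin d × Fin m, |ϑ p.1 p.2| := by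
    rw [← Finset.univ_product_univ, Finset.sum_product]
  have h2 : (∑ h, ∑ i, ϑ h i ^ 2) = ∑ p : Fin d × Fin m, ϑ p.1 p.2 ^ 2 := by
    rw [← Finset.univ_product_univ, Finset.sum_product]
  rw [h1, h2]
  have := sq_sum_le_card_mul_sum_sq (s := (Finset.univ : Finset (Fin d × Fin m)))
    (f := fun p => |ϑ p.1 p.2|)
  simp only [Finset.card_univ, Fintype.card_prod, Fintype.card_fin, sq_abs] at this
  calc (∑ p : Fin d × Fin m, |ϑ p.1 p.2|) ^ 2
      ≤ ((d * m : ℕ) : ℝ) * ∑ p : Fin d × Fin m, ϑ p.1 p.2 ^ 2 := by exact_mod_cast this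
    _ = (d * m : ℝ) * ∑ p : Fin d × Fin m, ϑ p.1 p.2 ^ 2 := by push_cast; ring

end Aux

theorem statement17 (d m : ℕ) (hd : 0 < d) (hm : 0 < m)
    (q : Fin d → Fin d → (Fin d → ℝ) → ℝ)
    (A : Fin d → Fin d → Fin m → Fin m → (Fin d → ℝ) → ℝ)
    (lamQ : (Fin d → ℝ) → ℝ) (k₀ : ℝ) (hk₀ : 0 < k₀)
    -- `Q(x)` is symmetric and positive definite, with (minimum) eigenvalue lower bound
    -- `λ_Q(x) > 0`:
    (hsym : ∀ (x : Fin d → ℝ) (h k : Fin d), q h k x = q k h x)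
    (hlampos : ∀ x : Fin d → ℝ, 0 < lamQ x)
    (hlam : ∀ (x : Fin d → ℝ) (ξ : Fin d → ℝ),
      lamQ x * ∑ i, ξ i ^ 2 ≤ ∑ h, ∑ k, q h k x * ξ h * ξ k)
    -- `Σ_{h,k} (A^{hk}(x) ϑ^k, ϑ^h) ≥ 0` for real vectors:
    (hApos : ∀ (x : Fin d → ℝ) (ϑ : Fin d → Fin m → ℝ),
      0 ≤ ∑ h, ∑ k, ∑ i, ∑ j, A h k i j x * ϑ k j * ϑ h i)
    -- `|a^{hk}_{ij}(x)| ≤ k₀ λ_Q(x)`: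
    (hAbound : ∀ (x : Fin d → ℝ) (h k : Fin d) (i j : Fin m), |A h k i j x| ≤ k₀ * lamQ x) :
    ∀ (x : Fin d → ℝ) (θ : Fin d → Fin m → ℂ),
      0 ≤ (Aform A x θ).re ∧
      (Aform A x θ).re ≤ (m : ℝ) * d * k₀ * (Qdiagform q x θ).re ∧
      |(Aform A x θ).im| ≤ (m : ℝ) * d * k₀ * (Qdiagform q x θ).re := by

  intro x θ
  have hc : (0:ℝ) ≤ k₀ * lamQ x := le_of_lt (mul_pos hk₀ (hlampos x))
  set α : Fin d → Fin m → ℝ := fun h i => (θ h i).re with hα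
  set β : Fin d → Fin m → ℝ := fun h i => (θ h i).im with hβ
  -- real and imaginary parts of the forms
  have hre : (Aform A x θ).re
      = (∑ h, ∑ k, ∑ i, ∑ j, A h k i j x * α k j * α h i)
      + (∑ h, ∑ k, ∑ i, ∑ j, A h k i j x * β k j * β h i) := by
    simp only [Aform, Complex.re_sum, ← Finset.sum_add_distrib]
    refine Finset.sum_congr rfl fun h _ => Finset.sum_congr rfl fun k _ =>
      Finset.sum_congr rfl fun i _ => Finset.sum_congr rfl fun j _ => ?_
    simp only [hα, hβ, Complex.mul_re, Complex.mul_im, Complex.conj_re, Complex.conj_im,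
      Complex.ofReal_re, Complex.ofReal_im]
    ring
  have him : (Aform A x θ).im
      = (∑ h, ∑ k, ∑ i, ∑ j, A h k i j x * β k j * α h i)
      - (∑ h, ∑ k, ∑ i, ∑ j, A h k i j x * α k j * β h i) := by
    simp only [Aform, Complex.im_sum, ← Finset.sum_sub_distrib]
    refine Finset.sum_congr rfl fun h _ => Finset.sum_congr rfl fun k _ =>
      Finset.sum_congr rfl fun i _ => Finset.sum_congr rfl fun j _ => ?_
    simp only [hα, hβ, Complex.mul_re, Complex.mul_im, Complex.conj_re, Complex.conj_im,
      Complex.ofReal_re, Complex.ofReal_im]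
    ring
  have hq : (Qdiagform q x θ).re
      = (∑ i, ∑ h, ∑ k, q h k x * α k i * α h i)
      + (∑ i, ∑ h, ∑ k, q h k x * β k i * β h i) := by
    simp only [Qdiagform, Complex.re_sum, ← Finset.sum_add_distrib]
    refine Finset.sum_congr rfl fun i _ => Finset.sum_congr rfl fun h _ =>
      Finset.sum_congr rfl fun k _ => ?_
    simp only [hα, hβ, Complex.mul_re, Complex.mul_im, Complex.conj_re, Complex.conj_im,
      Complex.ofReal_re, Complex.ofReal_im]
    ring
  -- lower bound for the Q-form
  have hq1 : ∀ ϑ : Fin d → Fin m → ℝ,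
      lamQ x * (∑ h, ∑ i, ϑ h i ^ 2) ≤ ∑ i, ∑ h, ∑ k, q h k x * ϑ k i * ϑ h i := by
    intro ϑ
    rw [Finset.sum_comm, Finset.mul_sum]
    refine Finset.sum_le_sum fun i _ => ?_
    calc lamQ x * ∑ h, ϑ h i ^ 2 ≤ ∑ h, ∑ k, q h k x * ϑ h i * ϑ k i := hlam x (fun h => ϑ h i)
      _ = ∑ h, ∑ k, q h k x * ϑ k i * ϑ h i := by
          refine Finset.sum_congr rfl fun h _ => Finset.sum_congr rfl fun k _ => ?_
          ring
  -- core bound on the A-sums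
  have hcore : ∀ ϑ ψ : Fin d → Fin m → ℝ,
      |∑ h, ∑ k, ∑ i, ∑ j, A h k i j x * ϑ k j * ψ h i|
        ≤ k₀ * lamQ x * ((∑ k, ∑ j, |ϑ k j|) * (∑ h, ∑ i, |ψ h i|)) :=
    fun ϑ ψ => aux_core (k₀ * lamQ x) hc (fun h k i j => A h k i j x)
      (fun h k i j => hAbound x h k i j) ϑ ψ
  set N1 : ℝ := ∑ h, ∑ i, |α h i| with hN1
  set N2 : ℝ := ∑ h, ∑ i, |β h i| with hN2
  -- the main comparison
  have hmain : k₀ * lamQ x * (N1 ^ 2 + N2 ^ 2) ≤ (m : ℝ) * d * k₀ * (Qdiagform q x θ).re := by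
    have h1 : N1 ^ 2 ≤ (d * m : ℝ) * ∑ h, ∑ i, α h i ^ 2 := aux_cs α
    have h2 : N2 ^ 2 ≤ (d * m : ℝ) * ∑ h, ∑ i, β h i ^ 2 := aux_cs β
    have h3 := hq1 α
    have h4 := hq1 β
    have hlx : (0:ℝ) ≤ lamQ x := le_of_lt (hlampos x)
    have hk0 : (0:ℝ) ≤ k₀ := le_of_lt hk₀
    have hmd : (0:ℝ) ≤ (m : ℝ) * d * k₀ := by positivity
    rw [hq]
    calc k₀ * lamQ x * (N1 ^ 2 + N2 ^ 2)
        = k₀ * (lamQ x * N1 ^ 2 + lamQ x * N2 ^ 2) := by ring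
      _ ≤ k₀ * (lamQ x * ((d * m : ℝ) * ∑ h, ∑ i, α h i ^ 2)
            + lamQ x * ((d * m : ℝ) * ∑ h, ∑ i, β h i ^ 2)) := by
          refine mul_le_mul_of_nonneg_left (add_le_add ?_ ?_) hk0
          · exact mul_le_mul_of_nonneg_left h1 hlx
          · exact mul_le_mul_of_nonneg_left h2 hlx
      _ = (m : ℝ) * d * k₀ * (lamQ x * (∑ h, ∑ i, α h i ^ 2)
            + lamQ x * (∑ h, ∑ i, β h i ^ 2)) := by push_cast; ring
      _ ≤ (m : ℝ) * d * k₀ * ((∑ i, ∑ h, ∑ k, q h k x * α k i * α h i)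
            + (∑ i, ∑ h, ∑ k, q h k x * β k i * β h i)) :=
          mul_le_mul_of_nonneg_left (add_le_add h3 h4) hmd
  refine ⟨?_, ?_, ?_⟩
  · rw [hre]
    exact add_nonneg (hApos x α) (hApos x β)
  · rw [hre]
    calc (∑ h, ∑ k, ∑ i, ∑ j, A h k i j x * α k j * α h i)
          + (∑ h, ∑ k, ∑ i, ∑ j, A h k i j x * β k j * β h i)
        ≤ |∑ h, ∑ k, ∑ i, ∑ j, A h k i j x * α k j * α h i|
          + |∑ h, ∑ k, ∑ i, ∑ j, A h k i j x * β k j * β h i| :=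
          add_le_add (le_abs_self _) (le_abs_self _)
      _ ≤ k₀ * lamQ x * (N1 * N1) + k₀ * lamQ x * (N2 * N2) :=
          add_le_add (hcore α α) (hcore β β)
      _ = k₀ * lamQ x * (N1 ^ 2 + N2 ^ 2) := by ring
      _ ≤ (m : ℝ) * d * k₀ * (Qdiagform q x θ).re := hmain
  · rw [him]
    calc |(∑ h, ∑ k, ∑ i, ∑ j, A h k i j x * β k j * α h i)
          - (∑ h, ∑ k, ∑ i, ∑ j, A h k i j x * α k j * β h i)|
        ≤ |∑ h, ∑ k, ∑ i, ∑ j, A h k i j x * β k j * α h i|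
          + |∑ h, ∑ k, ∑ i, ∑ j, A h k i j x * α k j * β h i| := abs_sub _ _
      _ ≤ k₀ * lamQ x * (N2 * N1) + k₀ * lamQ x * (N1 * N2) :=
          add_le_add (hcore β α) (hcore α β)
      _ ≤ k₀ * lamQ x * (N1 ^ 2 + N2 ^ 2) := by nlinarith [sq_nonneg (N1 - N2), hc]
      _ ≤ (m : ℝ) * d * k₀ * (Qdiagform q x θ).re := hmain
end
end

section
/- Suppose Q(x) = (q_{hk}(x)) is a symmetric positive definite real d×d matrix for every x ∈ ℝ^d, and let A^{hk} = q_{hk} G for h,k = 1,…,d, where G = (g_{ij}) is an m×m matrix-valued function with nonnegative bounded entries satisfying (G(x)ξ, ξ) ≥ 0 for all x ∈ ℝ^d, ξ ∈ ℝ^m, and let Λ_G > 0 be such that (G(x)ξ, ξ) ≤ Λ_G |ξ|² and Σ_{i,j} g_{ij}(x) η_i ξ_j ≤ Λ_G |η||ξ| hold as furnished by the boundedness of G. Then for every x ∈ ℝ^d and θ¹,…,θ^d ∈ ℂ^m, 0 ≤ Re Σ_{h,k=1}^d (A^{hk}(x)θ^k, θ^h) ≤ Λ_G Re Σ_{i=1}^m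 Σ_{h,k=1}^d q_{hk}(x) θ^k_i conj(θ^h_i) and |Im Σ_{h,k=1}^d (A^{hk}(x)θ^k, θ^h)| ≤ Λ_G Re Σ_{i=1}^m Σ_{h,k=1}^d q_{hk}(x) θ^k_i conj(θ^h_i); that is, the structural conditions on the coupling matrices hold with constant 𝒞 = Λ_G. -/
/-! Factor `Q(x) = CᵀC`. With `w^l = Σ_k C_{lk} θ^k`, the coupled form becomes
`Σ_l (G w^l, w^l)` and the right-hand side `Σ_l |w^l|²`, so everything reduces to a single
vector `w = a + i b ∈ ℂ^m`. There `Re (G w, w) = (G a, a) + (G b, b)`, while `Im (G w, w)` is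
the difference of the two bilinear values `Σ g_{ij} a_i b_j` and `Σ g_{ij} b_i a_j`, each at
most `Λ_G |a| |b|` in absolute value; and `2 |a| |b| ≤ |a|² + |b|² = |w|²`. -/

open ComplexConjugate

noncomputable section

section RealSesqForm

variable {ι : Type*} [Fintype ι] (G : ι → ι → ℝ)

def realSesqForm (w : ι → ℂ) : ℂ := ∑ i, ∑ j, (G i j : ℂ) * w j * conj (w i)

theorem realSesqForm_re (w : ι → ℂ) :
    (realSesqForm G w).re = ∑ i, ∑ j, G i j * (w j).re * (w i).re +
      ∑ i, ∑ j, G i j * (w j).im * (w i).im := by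
  simp only [realSesqForm, Complex.re_sum, ← Finset.sum_add_distrib, Complex.mul_re,
    Complex.mul_im, Complex.conj_re, Complex.conj_im, Complex.ofReal_re, Complex.ofReal_im]
  exact Finset.sum_congr rfl fun _ _ => Finset.sum_congr rfl fun _ _ => by ring

theorem realSesqForm_im (w : ι → ℂ) :
    (realSesqForm G w).im = ∑ i, ∑ j, G i j * (w i).re * (w j).im -
      ∑ i, ∑ j, G i j * (w i).im * (w j).re := by
  simp only [realSesqForm, Complex.im_sum, ← Finset.sum_sub_distrib, Complex.mul_re,
    Complex.mul_im, Complex.conj_re, Complex.conj_im, Complex.ofReal_re, Complex.ofReal_im]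
  exact Finset.sum_congr rfl fun _ _ => Finset.sum_congr rfl fun _ _ => by ring

theorem realSesqForm_re_nonneg (hG : ∀ ξ : ι → ℝ, 0 ≤ ∑ i, ∑ j, G i j * ξ j * ξ i)
    (w : ι → ℂ) : 0 ≤ (realSesqForm G w).re := by
  rw [realSesqForm_re]
  exact add_nonneg (hG _) (hG _)

theorem realSesqForm_re_le {Λ : ℝ}
    (hG : ∀ ξ : ι → ℝ, ∑ i, ∑ j, G i j * ξ j * ξ i ≤ Λ * ∑ i, ξ i ^ 2) (w : ι → ℂ) :
    (realSesqForm G w).re ≤ Λ * ∑ i, Complex.normSq (w i) := by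
  rw [realSesqForm_re]
  calc _ ≤ Λ * ∑ i, (w i).re ^ 2 + Λ * ∑ i, (w i).im ^ 2 := add_le_add (hG _) (hG _)
    _ = _ := by simp only [Complex.normSq_apply, ← mul_add, ← Finset.sum_add_distrib, sq]

theorem abs_sum_mul_le_of_sum_mul_le {Λ : ℝ}
    (hG : ∀ η ξ : ι → ℝ, ∑ i, ∑ j, G i j * η i * ξ j ≤
      Λ * √(∑ i, η i ^ 2) * √(∑ i, ξ i ^ 2)) (η ξ : ι → ℝ) :
    |∑ i, ∑ j, G i j * η i * ξ j| ≤ Λ * √(∑ i, η i ^ 2) * √(∑ i, ξ i ^ 2) := by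
  refine abs_le.mpr ⟨?_, hG η ξ⟩
  have := hG η (-ξ)
  simp only [Pi.neg_apply, mul_neg, Finset.sum_neg_distrib, neg_sq] at this
  linarith

theorem abs_realSesqForm_im_le {Λ : ℝ} (hΛ : 0 ≤ Λ)
    (hG : ∀ η ξ : ι → ℝ, ∑ i, ∑ j, G i j * η i * ξ j ≤
      Λ * √(∑ i, η i ^ 2) * √(∑ i, ξ i ^ 2)) (w : ι → ℂ) :
    |(realSesqForm G w).im| ≤ Λ * ∑ i, Complex.normSq (w i) := by
  set a := fun i => (w i).re
  set b := fun i => (w i).im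
  have hab := abs_sum_mul_le_of_sum_mul_le G hG a b
  have hba := abs_sum_mul_le_of_sum_mul_le G hG b a
  have hamgm : 2 * (√(∑ i, a i ^ 2) * √(∑ i, b i ^ 2)) ≤ ∑ i, a i ^ 2 + ∑ i, b i ^ 2 := by
    have := two_mul_le_add_sq √(∑ i, a i ^ 2) √(∑ i, b i ^ 2)
    rwa [Real.sq_sqrt (by positivity), Real.sq_sqrt (by positivity), mul_assoc] at this
  calc |(realSesqForm G w).im|
      ≤ |∑ i, ∑ j, G i j * a i * b j| + |∑ i, ∑ j, G i j * b i * a j| := by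
        rw [realSesqForm_im]; exact abs_sub _ _
    _ ≤ Λ * (2 * (√(∑ i, a i ^ 2) * √(∑ i, b i ^ 2))) := by linarith
    _ ≤ Λ * (∑ i, a i ^ 2 + ∑ i, b i ^ 2) := mul_le_mul_of_nonneg_left hamgm hΛ
    _ = Λ * ∑ i, Complex.normSq (w i) := by
        simp only [Complex.normSq_apply, ← Finset.sum_add_distrib, sq, a, b]

end RealSesqForm

section Factorization

variable {ι ι' κ : Type*} [Fintype ι] [Fintype ι'] [Fintype κ]

open scoped MatrixOrder in
theorem exists_eq_sum_mul_of_sum_mul_nonneg [DecidableEq ι] (q : ι → ι → ℝ)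
    (hsym : ∀ h k, q h k = q k h) (hnonneg : ∀ ξ : ι → ℝ, 0 ≤ ∑ h, ∑ k, q h k * ξ h * ξ k) :
    ∃ C : Matrix ι ι ℝ, ∀ h k, q h k = ∑ l, C l h * C l k := by
  have hpsd : (Matrix.of q).PosSemidef := by
    refine .of_dotProduct_mulVec_nonneg (Matrix.IsHermitian.ext fun h k => hsym k h) fun ξ => ?_
    simpa [dotProduct, Matrix.mulVec, Finset.mul_sum, mul_assoc, mul_left_comm]
      using hnonneg ξ
  obtain ⟨C, hC⟩ := CStarAlgebra.nonneg_iff_eq_star_mul_self.mp hpsd.nonneg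
  refine ⟨C, fun h k => ?_⟩
  simpa [Matrix.mul_apply] using congrFun (congrFun hC h) k

variable {q : ι → ι → ℝ} {C : κ → ι → ℝ}

theorem sum_mul_mul_conj_eq_sum_of_eq_sum_mul (hq : ∀ h k, q h k = ∑ l, C l h * C l k)
    (u v : ι → ℂ) :
    ∑ h, ∑ k, (q h k : ℂ) * u k * conj (v h) =
      ∑ l, (∑ k, (C l k : ℂ) * u k) * conj (∑ h, (C l h : ℂ) * v h) := by
  simp only [hq, map_sum, map_mul, Complex.conj_ofReal, Complex.ofReal_sum, Complex.ofReal_mul,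
    Finset.sum_mul, Finset.mul_sum]
  rw [Finset.sum_comm_cycle]
  exact Finset.sum_congr rfl fun _ _ => Finset.sum_congr rfl fun _ _ =>
    Finset.sum_congr rfl fun _ _ => by ring

theorem sum_mul_mul_conj_eq_sum_realSesqForm (hq : ∀ h k, q h k = ∑ l, C l h * C l k)
    (G : ι' → ι' → ℝ) (θ : ι → ι' → ℂ) :
    ∑ h, ∑ k, ∑ i, ∑ j, ((q h k * G i j : ℝ) : ℂ) * θ k j * conj (θ h i) =
      ∑ l, realSesqForm G (fun i => ∑ k, (C l k : ℂ) * θ k i) := by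
  calc ∑ h, ∑ k, ∑ i, ∑ j, ((q h k * G i j : ℝ) : ℂ) * θ k j * conj (θ h i)
      = ∑ i, ∑ j, (G i j : ℂ) * ∑ h, ∑ k, (q h k : ℂ) * θ k j * conj (θ h i) := by
        simp only [Finset.mul_sum]
        rw [Finset.sum_comm_cycle]
        refine Finset.sum_congr rfl fun i _ => ?_
        rw [Finset.sum_comm_cycle]
        exact Finset.sum_congr rfl fun _ _ => Finset.sum_congr rfl fun _ _ =>
          Finset.sum_congr rfl fun _ _ => by push_cast; ring
    _ = _ := by
        simp only [sum_mul_mul_conj_eq_sum_of_eq_sum_mul hq, Finset.mul_sum]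
        rw [Finset.sum_comm_cycle]
        exact Finset.sum_congr rfl fun _ _ => Finset.sum_congr rfl fun _ _ =>
          Finset.sum_congr rfl fun _ _ => by ring

theorem re_sum_mul_mul_conj_eq_sum_normSq (hq : ∀ h k, q h k = ∑ l, C l h * C l k)
    (θ : ι → ι' → ℂ) :
    (∑ i, ∑ h, ∑ k, (q h k : ℂ) * θ k i * conj (θ h i)).re =
      ∑ l, ∑ i, Complex.normSq (∑ k, (C l k : ℂ) * θ k i) := by
  simp only [sum_mul_mul_conj_eq_sum_of_eq_sum_mul hq, Complex.mul_conj, Complex.re_sum,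
    Complex.ofReal_re]
  exact Finset.sum_comm

end Factorization

theorem statement18_general (d m : ℕ)
    (q : Fin d → Fin d → (Fin d → ℝ) → ℝ)
    (g : Fin m → Fin m → (Fin d → ℝ) → ℝ) (ΛG : ℝ) (hΛG : 0 < ΛG)
    -- `Q(x)` is symmetric and positive definite:
    (hsym : ∀ (x : Fin d → ℝ) (h k : Fin d), q h k x = q k h x)
    (hposdef : ∀ (x : Fin d → ℝ) (ξ : Fin d → ℝ), ξ ≠ 0 →
      0 < ∑ h, ∑ k, q h k x * ξ h * ξ k)
    -- `G` has nonnegative bounded entries and `(G(x)ξ, ξ) ≥ 0`: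
    (hGpos : ∀ (x : Fin d → ℝ) (ξ : Fin m → ℝ), 0 ≤ ∑ i, ∑ j, g i j x * ξ j * ξ i)
    -- `(G(x)ξ, ξ) ≤ Λ_G |ξ|²` and `Σ_{i,j} g_{ij}(x) η_i ξ_j ≤ Λ_G |η| |ξ|`:
    (hG1 : ∀ (x : Fin d → ℝ) (ξ : Fin m → ℝ),
      ∑ i, ∑ j, g i j x * ξ j * ξ i ≤ ΛG * ∑ i, ξ i ^ 2)
    (hG2 : ∀ (x : Fin d → ℝ) (η ξ : Fin m → ℝ),
      ∑ i, ∑ j, g i j x * η i * ξ j ≤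
        ΛG * Real.sqrt (∑ i, η i ^ 2) * Real.sqrt (∑ i, ξ i ^ 2)) :
    ∀ (x : Fin d → ℝ) (θ : Fin d → Fin m → ℂ),
      0 ≤ (Aform (fun h k i j y => q h k y * g i j y) x θ).re ∧
      (Aform (fun h k i j y => q h k y * g i j y) x θ).re ≤
        ΛG * (Qdiagform q x θ).re ∧
      |(Aform (fun h k i j y => q h k y * g i j y) x θ).im| ≤
        ΛG * (Qdiagform q x θ).re := by
  intro x θ
  obtain ⟨C, hC⟩ := exists_eq_sum_mul_of_sum_mul_nonneg (q · · x) (hsym x) fun ξ => by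
    rcases eq_or_ne ξ 0 with rfl | hξ
    · simp
    · exact (hposdef x ξ hξ).le
  have hA : Aform (fun h k i j y => q h k y * g i j y) x θ =
      ∑ l, realSesqForm (g · · x) (fun i => ∑ k, (C l k : ℂ) * θ k i) :=
    sum_mul_mul_conj_eq_sum_realSesqForm hC _ θ
  rw [hA, Complex.re_sum, Complex.im_sum, Qdiagform, re_sum_mul_mul_conj_eq_sum_normSq hC,
    Finset.mul_sum]
  exact ⟨Finset.sum_nonneg fun _ _ => realSesqForm_re_nonneg _ (hGpos x) _,
    Finset.sum_le_sum fun _ _ => realSesqForm_re_le _ (hG1 x) _,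
    (Finset.abs_sum_le_sum_abs _ _).trans <|
      Finset.sum_le_sum fun _ _ => abs_realSesqForm_im_le _ hΛG.le (hG2 x) _⟩

theorem statement18 (d m : ℕ) (hd : 0 < d) (hm : 0 < m)
    (q : Fin d → Fin d → (Fin d → ℝ) → ℝ)
    (g : Fin m → Fin m → (Fin d → ℝ) → ℝ) (ΛG : ℝ) (hΛG : 0 < ΛG)
    -- `Q(x)` is symmetric and positive definite:
    (hsym : ∀ (x : Fin d → ℝ) (h k : Fin d), q h k x = q k h x)
    (hposdef : ∀ (x : Fin d → ℝ) (ξ : Fin d → ℝ), ξ ≠ 0 →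
      0 < ∑ h, ∑ k, q h k x * ξ h * ξ k)
    -- `G` has nonnegative bounded entries and `(G(x)ξ, ξ) ≥ 0`:
    (hgnonneg : ∀ (i j : Fin m) (x : Fin d → ℝ), 0 ≤ g i j x)
    (hgbdd : ∀ i j : Fin m, ∃ M : ℝ, ∀ x : Fin d → ℝ, g i j x ≤ M)
    (hGpos : ∀ (x : Fin d → ℝ) (ξ : Fin m → ℝ), 0 ≤ ∑ i, ∑ j, g i j x * ξ j * ξ i)
    -- `(G(x)ξ, ξ) ≤ Λ_G |ξ|²` and `Σ_{i,j} g_{ij}(x) η_i ξ_j ≤ Λ_G |η| |ξ|`: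
    (hG1 : ∀ (x : Fin d → ℝ) (ξ : Fin m → ℝ),
      ∑ i, ∑ j, g i j x * ξ j * ξ i ≤ ΛG * ∑ i, ξ i ^ 2)
    (hG2 : ∀ (x : Fin d → ℝ) (η ξ : Fin m → ℝ),
      ∑ i, ∑ j, g i j x * η i * ξ j ≤
        ΛG * Real.sqrt (∑ i, η i ^ 2) * Real.sqrt (∑ i, ξ i ^ 2)) :
    ∀ (x : Fin d → ℝ) (θ : Fin d → Fin m → ℂ),
      0 ≤ (Aform (fun h k i j y => q h k y * g i j y) x θ).re ∧
      (Aform (fun h k i j y => q h k y * g i j y) x θ).re ≤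
        ΛG * (Qdiagform q x θ).re ∧
      |(Aform (fun h k i j y => q h k y * g i j y) x θ).im| ≤
        ΛG * (Qdiagform q x θ).re :=
  statement18_general d m q g ΛG hΛG hsym hposdef hGpos hG1 hG2
end
end

section
/- Let Q(x) = diag(q_{11}(x),…,q_{dd}(x)) + Q₀(x) with Q₀(x) real antisymmetric, inf_{x} q_{ii}(x) > k₁ > 0 for every i, and Σ_{j ≠ i}|q_{ij}(x)| ≤ k₂ q_{ii}(x) for every i and x. Suppose the m×m real matrices A^{hk}(x) satisfy Σ_{h,k=1}^d (A^{hk}(x)ϑ^k, ϑ^h) ≥ 0 for all ϑ¹,…,ϑ^d ∈ ℝ^m, 0 ≤ a^{hh}_{ij}(x) ≤ k₂ q_{hh}(x) for all i,j = 1,…,m and h = 1,…,d, and |a^{hk}_{ij}(x)| ≤ k₃ min_{r=1,…,d} q_{rr}(x) for all i,j = 1,…,m and h ≠ k, for some constant k₃ > 0. Then for every x ∈ ℝ^d and θ¹,…,θ^d ∈ ℂ^m, 0 ≤ Re Σ_{h,k=1}^d (A^{hk}(x)θ^k, θ^h) ≤ m(k₂ + d k₃) Re Σ_{i=1}^m Σ_{h,k=1}^d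 q_{hk}(x) θ^k_i conj(θ^h_i) and |Im Σ_{h,k=1}^d (A^{hk}(x)θ^k, θ^h)| ≤ m(k₂ + d k₃) Re Σ_{i=1}^m Σ_{h,k=1}^d q_{hk}(x) θ^k_i conj(θ^h_i); that is, the structural conditions on the coupling matrices hold with constant 𝒞 = m(k₂ + d k₃). -/
/-!
Write `θ = ξ + iη`. The real part of `Σ (A^{hk} θ^k, θ^h)` is the real form at `ξ` plus the real
form at `η`, hence nonnegative. In the real part of the `Q`-form the antisymmetric part `Q₀`
cancels, leaving `Σ_h q_hh |θ^h|²`. Both `|Re|` and `|Im|` are at most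
`Σ |a^{hk}_{ij}| |θ^k_j| |θ^h_i|`; since `|a^{hk}_{ij}| ≤ c_hk q_hh` and `≤ c_hk q_kk` with
`c_hk = k₂ δ_hk + k₃`, the AM-GM inequality bounds this by `m Σ_h (Σ_k c_hk) q_hh |θ^h|²`,
and `Σ_k c_hk = k₂ + d k₃`.
-/

open ComplexConjugate

noncomputable section

open Finset

section
variable {ι κ : Type*} [Fintype ι] [Fintype κ]

theorem sum_sum_eq_sum_diag_of_antisymm {M : Type*} [AddCommGroup M] [IsAddTorsionFree M]
    (f : ι → ι → M) (hf : ∀ h k, h ≠ k → f h k = -f k h) :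
    ∑ h, ∑ k, f h k = ∑ h, f h h := by
  classical
  set g : ι → ι → M := fun h k => f h k - if h = k then f h h else 0
  have hg : ∀ h k, g h k = -g k h := by
    intro h k
    by_cases hhk : h = k
    · subst hhk; simp [g]
    · simp [g, hhk, Ne.symm hhk, hf h k hhk]
  have hg0 : ∑ h, ∑ k, g h k = 0 := self_eq_neg.mp <| calc
    ∑ h, ∑ k, g h k = ∑ h, ∑ k, g k h := sum_comm
    _ = ∑ h, ∑ k, -g h k := sum_congr rfl fun h _ => sum_congr rfl fun k _ => hg k h
    _ = -∑ h, ∑ k, g h k := by simp only [sum_neg_distrib]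
  simpa [g, sub_eq_zero] using hg0

theorem re_sum_sum_mul_conj_of_antisymm (M : ι → ι → ℝ) (hM : ∀ h k, h ≠ k → M h k = -M k h)
    (z : ι → ℂ) :
    (∑ h, ∑ k, (M h k : ℂ) * z k * conj (z h)).re = ∑ h, M h h * ‖z h‖ ^ 2 := by
  have hre : ∀ h k, ((M h k : ℂ) * z k * conj (z h)).re = M h k * (z k * conj (z h)).re := by
    intro h k; rw [mul_assoc, Complex.re_ofReal_mul]
  simp only [Complex.re_sum, hre]
  rw [sum_sum_eq_sum_diag_of_antisymm]
  · simp only [Complex.mul_conj, Complex.normSq_eq_norm_sq, Complex.ofReal_re]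
  · intro h k hhk
    rw [hM h k hhk, ← Complex.conj_re, map_mul, Complex.conj_conj, mul_comm (conj (z k)),
      neg_mul]

theorem re_sum_mul_conj_eq_add (B : ι → ι → κ → κ → ℝ) (z : ι → κ → ℂ) :
    (∑ h, ∑ k, ∑ i, ∑ j, (B h k i j : ℂ) * z k j * conj (z h i)).re =
      (∑ h, ∑ k, ∑ i, ∑ j, B h k i j * (z k j).re * (z h i).re) +
        ∑ h, ∑ k, ∑ i, ∑ j, B h k i j * (z k j).im * (z h i).im := by
  simp only [Complex.re_sum, ← sum_add_distrib]
  simp [Complex.mul_re]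

theorem norm_sum_mul_conj_le (B : ι → ι → κ → κ → ℝ) (z : ι → κ → ℂ) :
    ‖∑ h, ∑ k, ∑ i, ∑ j, (B h k i j : ℂ) * z k j * conj (z h i)‖ ≤
      ∑ h, ∑ k, ∑ i, ∑ j, |B h k i j| * ‖z k j‖ * ‖z h i‖ := by
  refine (norm_sum_le _ _).trans (sum_le_sum fun h _ => ?_)
  refine (norm_sum_le _ _).trans (sum_le_sum fun k _ => ?_)
  refine (norm_sum_le _ _).trans (sum_le_sum fun i _ => ?_)
  refine (norm_sum_le _ _).trans (sum_le_sum fun j _ => ?_)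
  simp

theorem abs_mul_mul_le_of_abs_le {c p r : ℝ} (a b : ℝ) (hp : |c| ≤ p) (hr : |c| ≤ r) :
    |c| * a * b ≤ (p * a ^ 2 + r * b ^ 2) / 2 := by
  nlinarith [two_mul_le_add_sq a b, abs_nonneg c, mul_le_mul_of_nonneg_right hp (sq_nonneg a),
    mul_le_mul_of_nonneg_right hr (sq_nonneg b)]

theorem sum_abs_mul_mul_le (B : ι → ι → κ → κ → ℝ) (c : ι → ι → ℝ) (p : ι → ℝ)
    (hc : ∀ h k, c h k = c k h) (hB : ∀ h k i j, |B h k i j| ≤ c h k * p h)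
    (hB' : ∀ h k i j, |B h k i j| ≤ c h k * p k) (u : ι → κ → ℝ) :
    ∑ h, ∑ k, ∑ i, ∑ j, |B h k i j| * u k j * u h i ≤
      Fintype.card κ * ∑ h, (∑ k, c h k) * p h * ∑ i, u h i ^ 2 := by
  have hswap : ∑ h, ∑ k, ∑ _i : κ, ∑ j, c h k * p k * u k j ^ 2 =
      ∑ h, ∑ k, ∑ i, ∑ _j : κ, c h k * p h * u h i ^ 2 := by
    rw [sum_comm]
    refine sum_congr rfl fun h _ => sum_congr rfl fun k _ => ?_
    rw [sum_comm, hc]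
  calc ∑ h, ∑ k, ∑ i, ∑ j, |B h k i j| * u k j * u h i
      ≤ ∑ h, ∑ k, ∑ i, ∑ j, (c h k * p k * u k j ^ 2 + c h k * p h * u h i ^ 2) / 2 := by
        gcongr with h _ k _ i _ j _
        exact abs_mul_mul_le_of_abs_le _ _ (hB' h k i j) (hB h k i j)
    _ = ∑ h, ∑ k, ∑ i, ∑ j, c h k * p h * u h i ^ 2 := by
        simp only [add_div, sum_add_distrib, ← sum_div, hswap]; ring
    _ = Fintype.card κ * ∑ h, (∑ k, c h k) * p h * ∑ i, u h i ^ 2 := by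
        simp only [sum_const, card_univ, nsmul_eq_mul, mul_sum, sum_mul]
        exact sum_congr rfl fun h _ => sum_comm
end

theorem re_Qdiagform_eq {d m : ℕ} (q : Fin d → Fin d → (Fin d → ℝ) → ℝ) (x : Fin d → ℝ)
    (hq : ∀ h k, h ≠ k → q h k x = -q k h x) (θ : Fin d → Fin m → ℂ) :
    (Qdiagform q x θ).re = ∑ h, q h h x * ∑ i, ‖θ h i‖ ^ 2 := by
  rw [Qdiagform, Complex.re_sum]
  simp only [re_sum_sum_mul_conj_of_antisymm (q · · x) hq, mul_sum]
  exact sum_comm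

theorem statement19_general (d m : ℕ)
    (q : Fin d → Fin d → (Fin d → ℝ) → ℝ)
    (A : Fin d → Fin d → Fin m → Fin m → (Fin d → ℝ) → ℝ)
    (k₁ k₂ k₃ : ℝ) (hk₁ : 0 < k₁) (hk₃ : 0 < k₃)
    -- `Q = diag(q₁₁,…,q_dd) + Q₀` with `Q₀` antisymmetric:
    (hanti : ∀ (x : Fin d → ℝ) (i j : Fin d), i ≠ j → q i j x = - q j i x)
    -- `inf_x q_ii(x) > k₁`:
    (hdiag : ∀ (i : Fin d) (x : Fin d → ℝ), k₁ < q i i x)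
    -- `Σ_{h,k} (A^{hk}(x) ϑ^k, ϑ^h) ≥ 0` for real vectors:
    (hApos : ∀ (x : Fin d → ℝ) (ϑ : Fin d → Fin m → ℝ),
      0 ≤ ∑ h, ∑ k, ∑ i, ∑ j, A h k i j x * ϑ k j * ϑ h i)
    -- `0 ≤ a^{hh}_{ij}(x) ≤ k₂ q_{hh}(x)`:
    (hAdiag : ∀ (x : Fin d → ℝ) (h : Fin d) (i j : Fin m),
      0 ≤ A h h i j x ∧ A h h i j x ≤ k₂ * q h h x)
    -- `|a^{hk}_{ij}(x)| ≤ k₃ min_{r=1,…,d} q_rr(x)` for `h ≠ k`: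
    (hAoff : ∀ (x : Fin d → ℝ) (h k : Fin d), h ≠ k → ∀ (i j : Fin m) (r : Fin d),
      |A h k i j x| ≤ k₃ * q r r x) :
    ∀ (x : Fin d → ℝ) (θ : Fin d → Fin m → ℂ),
      0 ≤ (Aform A x θ).re ∧
      (Aform A x θ).re ≤ (m : ℝ) * (k₂ + d * k₃) * (Qdiagform q x θ).re ∧
      |(Aform A x θ).im| ≤ (m : ℝ) * (k₂ + d * k₃) * (Qdiagform q x θ).re := by
  intro x θ
  set c : Fin d → Fin d → ℝ := fun h k => (if h = k then k₂ else 0) + k₃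
  have hA : ∀ h k i j, |A h k i j x| ≤ c h k * q h h x ∧ |A h k i j x| ≤ c h k * q k k x := by
    intro h k i j
    by_cases hhk : h = k
    · subst hhk
      obtain ⟨hA0, hA1⟩ := hAdiag x h i j
      have : 0 ≤ k₃ * q h h x := mul_nonneg hk₃.le (hk₁.trans (hdiag h x)).le
      simp only [c, if_true, add_mul, abs_of_nonneg hA0]
      constructor <;> linarith
    · simpa [c, hhk] using ⟨hAoff x h k hhk i j h, hAoff x h k hhk i j k⟩
  have hnorm : ‖Aform A x θ‖ ≤ (m : ℝ) * (k₂ + d * k₃) * (Qdiagform q x θ).re :=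
    calc ‖Aform A x θ‖
        ≤ ∑ h, ∑ k, ∑ i, ∑ j, |A h k i j x| * ‖θ k j‖ * ‖θ h i‖ := norm_sum_mul_conj_le _ _
      _ ≤ m * ∑ h, (∑ k, c h k) * q h h x * ∑ i, ‖θ h i‖ ^ 2 := by
        simpa using sum_abs_mul_mul_le (A · · · · x) c (fun h => q h h x)
          (fun h k => by simp [c, eq_comm]) (fun h k i j => (hA h k i j).1)
          (fun h k i j => (hA h k i j).2) (‖θ · ·‖)
      _ = m * (k₂ + d * k₃) * (Qdiagform q x θ).re := by
        simp [re_Qdiagform_eq q x (hanti x) θ, c, sum_add_distrib, mul_sum, mul_assoc]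
  refine ⟨?_, (le_abs_self _).trans ((Complex.abs_re_le_norm _).trans hnorm),
    (Complex.abs_im_le_norm _).trans hnorm⟩
  rw [Aform, re_sum_mul_conj_eq_add]
  exact add_nonneg (hApos x _) (hApos x _)

theorem statement19 (d m : ℕ) (hd : 0 < d) (hm : 0 < m)
    (q : Fin d → Fin d → (Fin d → ℝ) → ℝ)
    (A : Fin d → Fin d → Fin m → Fin m → (Fin d → ℝ) → ℝ)
    (k₁ k₂ k₃ : ℝ) (hk₁ : 0 < k₁) (hk₂ : 0 < k₂) (hk₃ : 0 < k₃)
    -- `Q = diag(q₁₁,…,q_dd) + Q₀` with `Q₀` antisymmetric: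
    (hanti : ∀ (x : Fin d → ℝ) (i j : Fin d), i ≠ j → q i j x = - q j i x)
    -- `inf_x q_ii(x) > k₁`:
    (hdiag : ∀ (i : Fin d) (x : Fin d → ℝ), k₁ < q i i x)
    -- `Σ_{j ≠ i} |q_ij(x)| ≤ k₂ q_ii(x)`:
    (hbound : ∀ (i : Fin d) (x : Fin d → ℝ),
      ∑ j ∈ Finset.univ.erase i, |q i j x| ≤ k₂ * q i i x)
    -- `Σ_{h,k} (A^{hk}(x) ϑ^k, ϑ^h) ≥ 0` for real vectors:
    (hApos : ∀ (x : Fin d → ℝ) (ϑ : Fin d → Fin m → ℝ),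
      0 ≤ ∑ h, ∑ k, ∑ i, ∑ j, A h k i j x * ϑ k j * ϑ h i)
    -- `0 ≤ a^{hh}_{ij}(x) ≤ k₂ q_{hh}(x)`:
    (hAdiag : ∀ (x : Fin d → ℝ) (h : Fin d) (i j : Fin m),
      0 ≤ A h h i j x ∧ A h h i j x ≤ k₂ * q h h x)
    -- `|a^{hk}_{ij}(x)| ≤ k₃ min_{r=1,…,d} q_rr(x)` for `h ≠ k`:
    (hAoff : ∀ (x : Fin d → ℝ) (h k : Fin d), h ≠ k → ∀ (i j : Fin m) (r : Fin d),
      |A h k i j x| ≤ k₃ * q r r x) :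
    ∀ (x : Fin d → ℝ) (θ : Fin d → Fin m → ℂ),
      0 ≤ (Aform A x θ).re ∧
      (Aform A x θ).re ≤ (m : ℝ) * (k₂ + d * k₃) * (Qdiagform q x θ).re ∧
      |(Aform A x θ).im| ≤ (m : ℝ) * (k₂ + d * k₃) * (Qdiagform q x θ).re :=
  statement19_general d m q A k₁ k₂ k₃ hk₁ hk₃ hanti hdiag hApos hAdiag hAoff
end
end
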